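/- Let R be a PVMD and I a primary t-ideal of R. If I⁻¹ is a subring of the quotient field K, then I⁻¹ = (I:I). -/

import Mathlib

/-!
Common definitions: star operations (`v`- and `t`-closure), `t`-ideals, `t`-invertibility,
PVMDs, overrings, `t`-linked and `t`-flat overrings, localizations inside the quotient
field, Nagata and Kaplansky transforms, endomorphism rings of ideals.
-/

open scoped Classical

namespace PVMDPaper

noncomputable section

section Generic

variable (A : Type*) [CommRing A] (K : Type*) [Field K] [Algebra A K]

/-- The image of an integral ideal of `A` inside the field `K`, as an `A`-submodule of `K`. -/
def toK (I : Ideal A) : Submodule A K := Submodule.map (Algebra.linearMap A K) I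

variable {A K}

/-- The dual `I⁻¹ = (A : I) = {x ∈ K : x I ⊆ A}` of a submodule of `K`. -/
def dual (I : Submodule A K) : Submodule A K := 1 / I

/-- The `v`-closure `I_v = (I⁻¹)⁻¹`. -/
def vOp (I : Submodule A K) : Submodule A K := 1 / (1 / I)

/-- The `t`-closure `I_t`: the union of `J_v` where `J` ranges over the nonzero finitely
generated submodules `J ≤ I` (the union of this directed family is its supremum). -/
def tOp (I : Submodule A K) : Submodule A K :=
  sSup {V | ∃ J : Submodule A K, J ≠ ⊥ ∧ J.FG ∧ J ≤ I ∧ V = vOp J}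

variable (K)

/-- An (integral) ideal `I` of `A` is a `t`-ideal if `I = I_t`. -/
def IsTIdeal (I : Ideal A) : Prop := tOp (toK A K I) = toK A K I

/-- An ideal `I` is `t`-invertible if `(I I⁻¹)_t = A`. -/
def IsTInvertible (I : Ideal A) : Prop := tOp (toK A K I * dual (toK A K I)) = 1

/-- A `t`-maximal ideal: an ideal maximal in the set of proper integral `t`-ideals. -/
def IsTMaximal (M : Ideal A) : Prop :=
  M ≠ ⊤ ∧ IsTIdeal K M ∧ ∀ J : Ideal A, J ≠ ⊤ → IsTIdeal K J → M ≤ J → J = M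

variable (A)

/-- `A` is a Prüfer `v`-multiplication domain: every nonzero finitely generated ideal
is `t`-invertible. -/
def IsPVMD : Prop := ∀ I : Ideal A, I ≠ ⊥ → I.FG → IsTInvertible K I

/-- `Spec_t(A)` is Noetherian: the ascending chain condition on radical `t`-ideals. -/
def TSpecNoetherian : Prop :=
  ∀ f : ℕ →o Ideal A, (∀ n, IsTIdeal K (f n) ∧ (f n).radical = f n) →
    ∃ n, ∀ m, n ≤ m → f m = f n

variable {A K}

/-- A submodule of `K` is a subring of `K` iff it contains `1` and is closed under
multiplication (being an additive subgroup already). -/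
def IsSubringOf (S : Submodule A K) : Prop :=
  (1 : K) ∈ S ∧ ∀ x ∈ S, ∀ y ∈ S, x * y ∈ S

variable (K)

/-- The localization `A_P = {a/s : a ∈ A, s ∈ A ∖ P}` viewed as a subset of `K`. -/
def loc (P : Ideal A) : Set K :=
  {x | ∃ a s : A, s ∉ P ∧ x * algebraMap A K s = algebraMap A K a}

/-- The set `J A_P = {a/s : a ∈ J, s ∈ A ∖ P} ⊆ K`. -/
def locIdealAt (J P : Ideal A) : Set K :=
  {x | ∃ a ∈ J, ∃ s : A, s ∉ P ∧ x * algebraMap A K s = algebraMap A K a}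

/-- `Z(A, I)`: the set of zero divisors on `A/I`. -/
def ZSet (I : Ideal A) : Set A := {x | ∃ a : A, a ∉ I ∧ x * a ∈ I}

/-- `Q` is a maximal prime ideal of `Z(A,I)`: a prime contained in `Z(A,I)`, maximal
(under inclusion) among the primes contained in `Z(A,I)`. -/
def MaxPrimeOfZ (I Q : Ideal A) : Prop :=
  Q.IsPrime ∧ (Q : Set A) ⊆ ZSet I ∧
    ∀ Q' : Ideal A, Q'.IsPrime → (Q' : Set A) ⊆ ZSet I → Q ≤ Q' → Q' = Q

end Generic

section Overring

variable {R : Type*} [CommRing R] [IsDomain R]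
variable {K : Type*} [Field K] [Algebra R K] [IsFractionRing R K]

/-- The extension `IT` of an ideal `I` of `R` to an overring `T`, as a `T`-submodule of `K`. -/
def extendI (I : Ideal R) (T : Subalgebra R K) : Submodule T K :=
  Submodule.span T (algebraMap R K '' (I : Set R))

/-- The extension `IT` of an `R`-submodule `I` of `K` to an overring `T`. -/
def extendS (I : Submodule R K) (T : Subalgebra R K) : Submodule T K :=
  Submodule.span T (I : Set K)

/-- An overring `T` of `R` is `t`-linked over `R` if `(IT)⁻¹ = T` for each finitely
generated ideal `I` of `R` with `I⁻¹ = R`. -/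
def IsTLinked (T : Subalgebra R K) : Prop :=
  ∀ I : Ideal R, I.FG → dual (toK R K I) = 1 → dual (extendI I T) = 1

/-- An overring `T` of `R` is `t`-flat over `R` if `T_M = R_{M ∩ R}` for each
`t`-maximal ideal `M` of `T`. -/
def IsTFlat (T : Subalgebra R K) : Prop :=
  ∀ M : Ideal T, IsTMaximal K M → loc K M = loc K (M.comap (algebraMap R T))

variable (R K)

/-- `R` is a `tQR`-domain: a PVMD all of whose `t`-linked overrings are localizations
of `R` at multiplicative sets. -/
def IsTQR : Prop :=
  IsPVMD R K ∧ ∀ T : Subalgebra R K, IsTLinked T → ∃ S : Submonoid R,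
    (T : Set K) = {x | ∃ a : R, ∃ s ∈ S, x * algebraMap R K s = algebraMap R K a}

variable {R K}
variable (K)

/-- The endomorphism ring `(I : I) = {x ∈ K : x I ⊆ I}` of an ideal `I`, as an
overring of `R`. -/
def endoRing (I : Ideal R) : Subalgebra R K where
  carrier := {x : K | ∀ y ∈ toK R K I, x * y ∈ toK R K I}
  mul_mem' := by
    intro a b ha hb y hy
    rw [mul_assoc]
    exact ha _ (hb _ hy)
  one_mem' := by
    intro y hy
    rwa [one_mul]
  add_mem' := by
    intro a b ha hb y hy
    rw [add_mul]
    exact Submodule.add_mem _ (ha y hy) (hb y hy)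
  zero_mem' := by
    intro y hy
    rw [zero_mul]
    exact Submodule.zero_mem _
  algebraMap_mem' := by
    intro r y hy
    rw [← Algebra.smul_def]
    exact Submodule.smul_mem _ r hy

set_option synthInstance.maxHeartbeats 400000 in
/-- The ideal `I`, viewed as an ideal of its endomorphism ring `(I : I)`. -/
def idealInEndo (I : Ideal R) : Ideal (endoRing K I) where
  carrier := {x | (x : K) ∈ toK R K I}
  add_mem' := by
    intro a b ha hb
    simp only [Set.mem_setOf_eq] at *
    rw [AddMemClass.coe_add]
    exact Submodule.add_mem _ ha hb
  zero_mem' := by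
    simp only [Set.mem_setOf_eq, ZeroMemClass.coe_zero]
    exact Submodule.zero_mem _
  smul_mem' := by
    intro c x hx
    simp only [Set.mem_setOf_eq] at *
    rw [smul_eq_mul, MulMemClass.coe_mul]
    exact c.2 _ hx

/-- The Kaplansky transform `Ω(I) = {u ∈ K : ∀ a ∈ I, ∃ n ≥ 1, u aⁿ ∈ R}`, as an
overring of `R`. -/
def kaplansky (I : Ideal R) : Subalgebra R K where
  carrier := {u : K | ∀ a ∈ I, ∃ n : ℕ, 0 < n ∧
    ∃ r : R, u * (algebraMap R K a) ^ n = algebraMap R K r}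
  mul_mem' := by
    intro u v hu hv a ha
    obtain ⟨n, hn, r, hr⟩ := hu a ha
    obtain ⟨m, hm, s, hs⟩ := hv a ha
    refine ⟨n + m, by omega, r * s, ?_⟩
    rw [map_mul, ← hr, ← hs, pow_add]
    ring
  one_mem' := by
    intro a ha
    exact ⟨1, one_pos, a, by rw [pow_one, one_mul]⟩
  add_mem' := by
    intro u v hu hv a ha
    obtain ⟨n, hn, r, hr⟩ := hu a ha
    obtain ⟨m, hm, s, hs⟩ := hv a ha
    refine ⟨n + m, by omega, r * a ^ m + s * a ^ n, ?_⟩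
    rw [map_add, map_mul, map_mul, map_pow, map_pow, ← hr, ← hs, pow_add, add_mul]
    ring
  zero_mem' := by
    intro a ha
    exact ⟨1, one_pos, 0, by rw [map_zero, zero_mul]⟩
  algebraMap_mem' := by
    intro r a ha
    exact ⟨1, one_pos, r * a, by rw [map_mul, pow_one]⟩

/-- The Nagata (ideal) transform `T(I) = ⋃_{n ≥ 1} (R : Iⁿ)`, as an overring of `R`. -/
def nagata (I : Ideal R) : Subalgebra R K where
  carrier := {x : K | ∃ n : ℕ, ∀ y ∈ I ^ (n + 1),
    ∃ r : R, x * algebraMap R K y = algebraMap R K r}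
  mul_mem' := by
    intro x x' hx hx'
    obtain ⟨n, hn⟩ := hx
    obtain ⟨m, hm⟩ := hx'
    refine ⟨n + m + 1, fun y hy => ?_⟩
    rw [show n + m + 1 + 1 = (n + 1) + (m + 1) by omega, pow_add] at hy
    refine Submodule.mul_induction_on hy ?_ ?_
    · intro a ha b hb
      obtain ⟨r, hr⟩ := hn a ha
      obtain ⟨s, hs⟩ := hm b hb
      refine ⟨r * s, ?_⟩
      rw [map_mul, map_mul, ← hr, ← hs]
      ring
    · rintro y1 y2 ⟨r1, h1⟩ ⟨r2, h2⟩
      exact ⟨r1 + r2, by rw [map_add, map_add, mul_add, h1, h2]⟩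
  one_mem' := ⟨0, fun y _ => ⟨y, by rw [one_mul]⟩⟩
  add_mem' := by
    intro x x' hx hx'
    obtain ⟨n, hn⟩ := hx
    obtain ⟨m, hm⟩ := hx'
    refine ⟨n + m + 1, fun y hy => ?_⟩
    have h1 : y ∈ I ^ (n + 1) := Ideal.pow_le_pow_right (by omega) hy
    have h2 : y ∈ I ^ (m + 1) := Ideal.pow_le_pow_right (by omega) hy
    obtain ⟨r, hr⟩ := hn y h1
    obtain ⟨s, hs⟩ := hm y h2
    exact ⟨r + s, by rw [map_add, add_mul, hr, hs]⟩
  zero_mem' := ⟨0, fun y _ => ⟨0, by rw [map_zero, zero_mul]⟩⟩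
  algebraMap_mem' := by
    intro r
    exact ⟨0, fun y _ => ⟨r * y, by rw [map_mul]⟩⟩

end Overring

/-!
Put `P = rad I`. For `x ∈ I⁻¹` and `a ∈ I` let `r = x a ∈ R`; as `I⁻¹` is a ring, `xⁿ⁺¹ a ∈ R`,
i.e. `aⁿ ∣ rⁿ⁺¹` for all `n`. Since `(a, r)` is `t`-invertible and the `t`-closure of the radical
of a `t`-ideal stays inside it, `(a, r)(a, r)⁻¹ ⊄ P`, which yields `s ∉ P` with `a ∣ s r` or
`r ∣ s a`: the valuation property of `R_P`, without localizing. If `s r = c a ∈ I` then `r ∈ I`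
because `I` is `P`-primary. If `s a = c r`, then `c r ∈ I`, so `r ∈ I` or `cⁿ ∈ I` for some `n`,
and in the latter case `sⁿ r = (rⁿ⁺¹ / aⁿ) cⁿ ∈ I`, so again `r ∈ I`.
-/

section Closures

variable {A : Type*} [CommRing A] {K : Type*} [Field K] [Algebra A K]

lemma toK_le_one (I : Ideal A) : toK A K I ≤ 1 := by
  rintro _ ⟨y, -, rfl⟩
  exact Submodule.mem_one.mpr ⟨y, rfl⟩

lemma toK_pow (I : Ideal A) (n : ℕ) : toK A K (I ^ n) = toK A K I ^ n :=
  Submodule.map_pow (I : Submodule A A) (Algebra.ofId A K) n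

lemma toK_span_pair (u w : A) :
    toK A K (Ideal.span {u, w}) = Submodule.span A {algebraMap A K u, algebraMap A K w} := by
  rw [toK, ← IsLocalization.coeSubmodule, IsLocalization.coeSubmodule_span, Set.image_pair]

lemma le_vOp (M : Submodule A K) : M ≤ vOp M :=
  Submodule.le_div_iff_mul_le.mpr Submodule.mul_one_div_le_one

lemma vOp_le_one {M : Submodule A K} (hM : M ≤ 1) : vOp M ≤ 1 := fun z hz => by
  simpa using hz 1 (Submodule.one_mem_div.mpr hM)

lemma vOp_mul_le (M N : Submodule A K) : vOp M * vOp N ≤ vOp (M * N) := by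
  refine Submodule.mul_le.mpr fun x hx y hy w hw => ?_
  have hxw : x * w ∈ 1 / N := fun b hb => by
    have hwb : w * b ∈ 1 / M := fun a ha => by
      simpa only [mul_assoc, mul_comm b a] using hw (a * b) (Submodule.mul_mem_mul ha hb)
    simpa only [mul_assoc] using hx _ hwb
  simpa only [mul_comm, mul_left_comm] using hy _ hxw

lemma vOp_pow_le (M : Submodule A K) (n : ℕ) : vOp M ^ n ≤ vOp (M ^ n) := by
  induction n with
  | zero => exact le_vOp 1
  | succ n ih =>
    rw [pow_succ, pow_succ]
    exact (mul_le_mul_left ih _).trans (vOp_mul_le _ _)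

lemma tOp_mono {M N : Submodule A K} (h : M ≤ N) : tOp M ≤ tOp N :=
  sSup_le_sSup fun _ ⟨J, hJ, hfg, hle, hV⟩ => ⟨J, hJ, hfg, hle.trans h, hV⟩

lemma exists_eq_add_of_mem_span_pair_mul {u w f : K} {D : Submodule A K}
    (hf : f ∈ Submodule.span A {u, w} * D) : ∃ a ∈ D, ∃ b ∈ D, f = u * a + w * b := by
  refine Submodule.mul_induction_on hf (fun g hg z hz => ?_) ?_
  · obtain ⟨α, β, rfl⟩ := Submodule.mem_span_pair.mp hg
    exact ⟨α • z, D.smul_mem α hz, β • z, D.smul_mem β hz, by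
      simp only [Algebra.smul_def]; ring⟩
  · rintro _ _ ⟨a, ha, b, hb, rfl⟩ ⟨a', ha', b', hb', rfl⟩
    exact ⟨a + a', D.add_mem ha ha', b + b', D.add_mem hb hb', by ring⟩

lemma IsSubringOf.pow_mem {S : Submodule A K} (hS : IsSubringOf S) {x : K} (hx : x ∈ S)
    (n : ℕ) : x ^ n ∈ S := by
  induction n with
  | zero => simpa using hS.1
  | succ n ih => simpa only [pow_succ] using hS.2 _ ih _ hx

end Closures

section FractionRing

variable {R : Type*} [CommRing R] {K : Type*} [Field K] [Algebra R K] [IsFractionRing R K]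

lemma exists_fg_le_toK_eq {F : Submodule R K} (hF : F.FG) {J : Ideal R}
    (hFJ : F ≤ toK R K J) : ∃ J₀ ≤ J, J₀.FG ∧ toK R K J₀ = F := by
  have hmap : toK R K (F.comap (Algebra.linearMap R K)) = F :=
    Submodule.map_comap_eq_of_le <| hFJ.trans <| by
      simpa [Submodule.one_eq_range] using toK_le_one J
  refine ⟨F.comap (Algebra.linearMap R K), fun y hy => ?_,
    Submodule.fg_of_fg_map_injective _ (IsFractionRing.injective R K) (hmap ▸ hF), hmap⟩
  obtain ⟨p, hp, hpy⟩ := hFJ hy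
  exact IsFractionRing.injective R K hpy ▸ hp

lemma tOp_toK_radical_le {I : Ideal R} (hI : IsTIdeal K I) :
    tOp (toK R K I.radical) ≤ toK R K I.radical := by
  refine sSup_le ?_
  rintro _ ⟨F, hF0, hFfg, hFle, rfl⟩ z hz
  obtain ⟨P, hPle, hPfg, rfl⟩ := exists_fg_le_toK_eq hFfg hFle
  obtain ⟨n, hn⟩ := Ideal.exists_pow_le_of_le_radical_of_fg hPle hPfg
  obtain ⟨w, rfl⟩ := Submodule.mem_one.mp (vOp_le_one (toK_le_one P) hz)
  have hPn0 : toK R K (P ^ n) ≠ ⊥ := by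
    rw [toK_pow, Ne, ← Submodule.zero_eq_bot]
    exact pow_ne_zero n (by rwa [Submodule.zero_eq_bot])
  have hle : vOp (toK R K (P ^ n)) ≤ tOp (toK R K I) :=
    le_sSup ⟨_, hPn0, Submodule.FG.map _ hPfg.pow, Submodule.map_mono hn, rfl⟩
  have hwn : algebraMap R K (w ^ n) ∈ toK R K I := by
    rw [← hI]
    refine hle ?_
    rw [map_pow, toK_pow]
    exact vOp_pow_le _ n (Submodule.pow_mem_pow _ hz n)
  obtain ⟨i, hi, hiw⟩ := hwn
  exact ⟨w, ⟨n, IsFractionRing.injective R K hiw ▸ hi⟩, rfl⟩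

lemma not_le_toK_radical_of_tOp_eq_one {I : Ideal R} (hI : IsTIdeal K I) (htop : I ≠ ⊤)
    {M : Submodule R K} (hM : tOp M = 1) : ¬M ≤ toK R K I.radical := by
  intro hle
  obtain ⟨p, hp, hp1⟩ :=
    tOp_toK_radical_le hI (tOp_mono hle (hM ▸ Submodule.one_le.mp le_rfl))
  rw [← map_one (algebraMap R K)] at hp1
  exact htop (Ideal.radical_eq_top.mp ((Ideal.eq_top_iff_one _).mpr
    (IsFractionRing.injective R K hp1 ▸ hp)))

theorem IsPVMD.exists_mul_eq_mul_or_mul_eq_mul (hR : IsPVMD R K) {I : Ideal R}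
    (hI : IsTIdeal K I) (htop : I ≠ ⊤) (u w : R) :
    ∃ s c : R, s ∉ I.radical ∧ (s * w = c * u ∨ s * u = c * w) := by
  have hrad : (1 : R) ∉ I.radical := fun h =>
    htop (Ideal.radical_eq_top.mp ((Ideal.eq_top_iff_one _).mpr h))
  by_cases h0 : u = 0 ∧ w = 0
  · exact ⟨1, 0, hrad, Or.inl (by simp [h0.2])⟩
  have hJ : Ideal.span {u, w} ≠ ⊥ := fun h =>
    h0 ⟨Ideal.span_eq_bot.mp h u (by simp), Ideal.span_eq_bot.mp h w (by simp)⟩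
  obtain ⟨f, hfM, hf⟩ := SetLike.not_le_iff_exists.mp
    (not_le_toK_radical_of_tOp_eq_one hI htop (hR _ hJ (Submodule.fg_span (Set.toFinite _))))
  rw [toK_span_pair] at hfM
  obtain ⟨a, ha, b, hb, rfl⟩ := exists_eq_add_of_mem_span_pair_mul hfM
  have hu : algebraMap R K u ∈ Submodule.span R {algebraMap R K u, algebraMap R K w} :=
    Submodule.subset_span (by simp)
  have hw : algebraMap R K w ∈ Submodule.span R {algebraMap R K u, algebraMap R K w} :=
    Submodule.subset_span (by simp)
  obtain ⟨t, ht⟩ := Submodule.mem_one.mp (ha _ hu)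
  obtain ⟨c, hc⟩ := Submodule.mem_one.mp (ha _ hw)
  obtain ⟨t', ht'⟩ := Submodule.mem_one.mp (hb _ hw)
  obtain ⟨c', hc'⟩ := Submodule.mem_one.mp (hb _ hu)
  by_cases htP : t ∈ I.radical
  · refine ⟨t', c', fun ht'P => hf ⟨t + t', I.radical.add_mem htP ht'P, ?_⟩, Or.inr ?_⟩
    · change algebraMap R K (t + t') = _
      rw [map_add, ht, ht']
      ring
    · apply IsFractionRing.injective R K
      rw [map_mul, map_mul, ht', hc']
      ring
  · refine ⟨t, c, htP, Or.inl (IsFractionRing.injective R K ?_)⟩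
    rw [map_mul, map_mul, ht, hc]
    ring

lemma pow_dvd_pow_succ_of_pow_mul_mem_one {x : K} {a r : R}
    (hr : x * algebraMap R K a = algebraMap R K r)
    (hx : ∀ n : ℕ, x ^ n * algebraMap R K a ∈ (1 : Submodule R K)) (n : ℕ) :
    a ^ n ∣ r ^ (n + 1) := by
  obtain ⟨e, he⟩ := Submodule.mem_one.mp (hx (n + 1))
  refine ⟨e, IsFractionRing.injective R K ?_⟩
  rw [map_pow, ← hr, map_mul, map_pow, he]
  ring

end FractionRing

theorem Ideal.IsPrimary.mem_of_pow_dvd_pow_succ {R : Type*} [CommRing R] [IsDomain R]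
    {I : Ideal R} (hI : I.IsPrimary) {a r s c : R} (ha : a ∈ I)
    (hdvd : ∀ n : ℕ, a ^ n ∣ r ^ (n + 1)) (hs : s ∉ I.radical)
    (hsc : s * r = c * a ∨ s * a = c * r) : r ∈ I := by
  have hmem : ∀ {x : R}, r * x ∈ I → x ∉ I.radical → r ∈ I := fun h hx =>
    ((Ideal.isPrimary_iff.mp hI).2 h).resolve_right hx
  rcases hsc with h | h
  · exact hmem (by rw [mul_comm, h]; exact I.mul_mem_left c ha) hs
  have hrc : r * c ∈ I := by
    rw [mul_comm, ← h]
    exact I.mul_mem_left s ha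
  rcases (Ideal.isPrimary_iff.mp hI).2 hrc with hr | ⟨n, hcn⟩
  · exact hr
  by_cases hr0 : r = 0
  · exact hr0 ▸ I.zero_mem
  obtain ⟨e, he⟩ := hdvd n
  have hrs : r * s ^ n = e * c ^ n := by
    refine mul_right_cancel₀ (pow_ne_zero n hr0) ?_
    calc r * s ^ n * r ^ n = s ^ n * r ^ (n + 1) := by ring
      _ = e * (s * a) ^ n := by rw [he]; ring
      _ = e * c ^ n * r ^ n := by rw [h]; ring
  exact hmem (hrs ▸ I.mul_mem_left e hcn) fun h => hs (Ideal.mem_radical_of_pow_mem h)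

section Statements

variable {R : Type*} [CommRing R] [IsDomain R]
variable {K : Type*} [Field K] [Algebra R K] [IsFractionRing R K]

theorem statement_9_general (hR : IsPVMD R K) (I : Ideal R)
    (hprim : I.IsPrimary) (htI : IsTIdeal K I)
    (hring : IsSubringOf (dual (toK R K I))) :
    dual (toK R K I) = toK R K I / toK R K I := by
  refine le_antisymm (fun x hx => ?_) fun x hx y hy => toK_le_one I (hx y hy)
  rintro _ ⟨a, ha, rfl⟩
  obtain ⟨r, hr⟩ := Submodule.mem_one.mp (hx _ ⟨a, ha, rfl⟩)
  obtain ⟨s, c, hs, hsc⟩ := hR.exists_mul_eq_mul_or_mul_eq_mul htI hprim.ne_top a r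
  have hdvd := pow_dvd_pow_succ_of_pow_mul_mem_one hr.symm
    fun n => hring.pow_mem hx n _ ⟨a, ha, rfl⟩
  exact ⟨r, Ideal.IsPrimary.mem_of_pow_dvd_pow_succ hprim ha hdvd hs hsc, hr⟩

/-- Let `R` be a PVMD and `I` a primary `t`-ideal of `R`. If `I⁻¹` is a
subring of `K`, then `I⁻¹ = (I : I)`. -/
theorem statement_9 (hR : IsPVMD R K) (I : Ideal R) (hbot : I ≠ ⊥) (htop : I ≠ ⊤)
    (hprim : I.IsPrimary) (htI : IsTIdeal K I)
    (hring : IsSubringOf (dual (toK R K I))) :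
    dual (toK R K I) = toK R K I / toK R K I :=
  statement_9_general hR I hprim htI hring

end Statements

end

end PVMDPaper
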